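/- arXiv:1308.5018 — 2 statements merged into one kernel-verified Lean document; each statement's English description precedes it below -/
import Mathlib

section
/- The polynomials S^k_s satisfy the recurrence S^{k,h}_{s-1} = S^k_s + Σ_{j=1}^{k-1} (-1)^j y^j_{(k-j)n} · S^{k-j}_s + (-1)^k y^k_0 for all k ≥ 1 and s ≥ 2. -/
/-
Shifting every variable by `h` turns a monomial of `S^k_{s-1}` with levels `λ` into the
monomial of `S^k_s` with levels `λ + 1`, so `S^{k,h}_{s-1}` is `S^k_s` minus its terms with
`λ_1 = 0`. In such a term the first factor is `y^{k_1}_{(k - k_1) n}` and the remaining factors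
form a term of `S^{k-k_1}_s` (with one part fewer, hence the sign); collecting by `j = k_1` gives
the correction terms, and the one-part composition `j = k` gives `y^k_0`.
-/

open Finset

/-- The finset of compositions of `k` into `p` positive parts, encoded as
functions `Fin p → Fin (k+1)`. -/
def comps (k p : ℕ) : Finset (Fin p → Fin (k + 1)) :=
  Finset.univ.filter fun K => (∀ i, 1 ≤ (K i : ℕ)) ∧ (∑ i, (K i : ℕ)) = k

/-- Partial sum `k_1 + ⋯ + k_{i-1}` of the parts of a composition before index `i`. -/
def prefSum {k p : ℕ} (K : Fin p → Fin (k + 1)) (i : Fin p) : ℤ :=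
  ∑ j ∈ Finset.Iio i, ((K j : ℕ) : ℤ)

/-- Partial sum `k_{i+1} + ⋯ + k_p` of the parts of a composition after index `i`. -/
def sufSum {k p : ℕ} (K : Fin p → Fin (k + 1)) (i : Fin p) : ℤ :=
  ∑ j ∈ Finset.Ioi i, ((K j : ℕ) : ℤ)

/-- The multivariate polynomial
`T^k_s = Σ_K Σ_{0 ≤ λ_1 < ⋯ < λ_p ≤ s-1} y^{k_1}_{λ_1 h} ⋯ y^{k_p}_{λ_p h + (k_1+⋯+k_{p-1})n}`,
summed over compositions `K = (k_1,…,k_p)` of `k`. -/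
def Tpoly {R : Type*} [CommRing R] (y : ℕ → ℤ → R) (n h : ℤ) (k s : ℕ) : R :=
  ∑ p ∈ Finset.Icc 1 k, ∑ K ∈ comps k p,
    ∑ lam ∈ Finset.univ.filter (fun lam : Fin p → Fin s => ∀ i j, i < j → lam i < lam j),
      ∏ i, y ((K i : ℕ)) (((lam i : ℕ) : ℤ) * h + prefSum K i * n)

/-- The multivariate polynomial
`S^k_s = (-1)^k Σ_K (-1)^p Σ_{0 ≤ λ_1 ≤ ⋯ ≤ λ_p ≤ s-1}
  y^{k_1}_{λ_1 h + (k_2+⋯+k_p)n} ⋯ y^{k_p}_{λ_p h}`,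
summed over compositions `K = (k_1,…,k_p)` of `k`. -/
def Spoly {R : Type*} [CommRing R] (y : ℕ → ℤ → R) (n h : ℤ) (k s : ℕ) : R :=
  (-1) ^ k * ∑ p ∈ Finset.Icc 1 k, (-1) ^ p *
    ∑ K ∈ comps k p,
      ∑ lam ∈ Finset.univ.filter (fun lam : Fin p → Fin s => ∀ i j, i ≤ j → lam i ≤ lam j),
        ∏ i, y ((K i : ℕ)) (((lam i : ℕ) : ℤ) * h + sufSum K i * n)

/-- The shift of variables `y^r_j ↦ y^r_{j+α}`. -/
def shiftVar {R : Type*} (y : ℕ → ℤ → R) (α : ℤ) : ℕ → ℤ → R := fun r j => y r (j + α)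

def compositionTuples (p m : ℕ) : Finset (Fin p → ℕ) :=
  (Finset.Nat.antidiagonalTuple p m).filter fun c => ∀ i, 0 < c i

@[simp]
lemma mem_compositionTuples {p m : ℕ} {c : Fin p → ℕ} :
    c ∈ compositionTuples p m ↔ (∀ i, 0 < c i) ∧ ∑ i, c i = m := by
  simp [compositionTuples, Finset.Nat.mem_antidiagonalTuple, and_comm]

lemma compositionTuples_eq_empty_of_lt {p m : ℕ} (h : m < p) : compositionTuples p m = ∅ := by
  refine eq_empty_of_forall_notMem fun c hc => ?_
  rw [mem_compositionTuples] at hc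
  have : p ≤ ∑ i, c i := by
    simpa using card_nsmul_le_sum univ c 1 fun i _ => hc.1 i
  omega

lemma compositionTuples_zero_left {m : ℕ} (hm : m ≠ 0) : compositionTuples 0 m = ∅ := by
  refine eq_empty_of_forall_notMem fun c hc => ?_
  simp [Eq.comm, hm] at hc

lemma compositionTuples_zero_zero : compositionTuples 0 0 = {![]} := by
  ext c
  simp [Subsingleton.elim c ![]]

lemma sum_compositionTuples_succ {M : Type*} [AddCommMonoid M] (p m : ℕ)
    (F : (Fin (p + 1) → ℕ) → M) :
    ∑ c ∈ compositionTuples (p + 1) m, F c =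
      ∑ j ∈ Icc 1 m, ∑ c ∈ compositionTuples p (m - j), F (Fin.cons j c) := by
  rw [sum_sigma']
  refine sum_nbij' (fun c => ⟨c 0, Fin.tail c⟩) (fun x => Fin.cons x.1 x.2) ?_ ?_ ?_ ?_ ?_
  · intro c hc
    simp only [mem_compositionTuples, Fin.forall_fin_succ, Fin.sum_univ_succ] at hc
    simp only [mem_sigma, mem_Icc, mem_compositionTuples, Fin.tail]
    exact ⟨⟨hc.1.1, by omega⟩, hc.1.2, by omega⟩
  · rintro ⟨j, c⟩ hc
    simp only [mem_sigma, mem_Icc, mem_compositionTuples] at hc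
    simp only [mem_compositionTuples, Fin.forall_fin_succ, Fin.sum_univ_succ, Fin.cons_zero,
      Fin.cons_succ]
    exact ⟨⟨hc.1.1, hc.2.1⟩, by omega⟩
  · intro c _
    exact Fin.cons_self_tail c
  · rintro ⟨j, c⟩ _
    simp
  · intro c _
    rw [Fin.cons_self_tail]

lemma sum_comps_eq_sum_compositionTuples {M : Type*} [AddCommMonoid M] {k p : ℕ}
    (F : (Fin p → ℕ) → M) :
    ∑ K ∈ comps k p, F (fun i => (K i : ℕ)) = ∑ c ∈ compositionTuples p k, F c := by
  have hle {c : Fin p → ℕ} (hc : c ∈ compositionTuples p k) (i : Fin p) : c i ≤ k :=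
    (mem_compositionTuples.1 hc).2 ▸ single_le_sum (fun _ _ => Nat.zero_le _) (mem_univ i)
  refine sum_nbij' (fun K i => (K i : ℕ)) (fun c i => ⟨min (c i) k, by omega⟩) ?_ ?_ ?_ ?_ ?_
  · intro K hK
    simp only [comps, mem_filter, mem_univ, true_and] at hK
    exact mem_compositionTuples.2 hK
  · intro c hc
    simp only [comps, mem_filter, mem_univ, true_and, min_eq_left (hle hc _)]
    exact mem_compositionTuples.1 hc
  · intro K _
    ext i
    simp [Nat.lt_succ_iff.1 (K i).isLt]
  · intro c hc
    ext i
    simp [hle hc i]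
  · intro K _
    rfl

section

variable {R : Type*} [CommRing R] (y : ℕ → ℤ → R) (n h : ℤ)

def ladderTerm {p s : ℕ} (c : Fin p → ℕ) (lam : Fin p → Fin s) : R :=
  ∏ i, y (c i) ((lam i : ℕ) * h + (∑ j ∈ Ioi i, c j : ℕ) * n)

def monotoneSum {p : ℕ} (c : Fin p → ℕ) (s : ℕ) : R :=
  ∑ lam ∈ univ.filter (fun lam : Fin p → Fin s => Monotone lam), ladderTerm y n h c lam

lemma ladderTerm_succ_comp {p s : ℕ} (c : Fin p → ℕ) (lam : Fin p → Fin s) :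
    ladderTerm y n h c (Fin.succ ∘ lam) = ladderTerm (shiftVar y h) n h c lam := by
  refine prod_congr rfl fun i _ => congrArg _ ?_
  simp only [Function.comp_apply, Fin.val_succ]
  push_cast
  ring

lemma ladderTerm_cons_zero {p s : ℕ} (c : Fin (p + 1) → ℕ) (lam : Fin p → Fin (s + 1)) :
    ladderTerm y n h c (Fin.cons 0 lam) =
      y (c 0) ((∑ i : Fin p, c i.succ : ℕ) * n) * ladderTerm y n h (Fin.tail c) lam := by
  simp [ladderTerm, Fin.prod_univ_succ, Fin.tail]

lemma monotone_cons_bot_iff {α : Type*} [Preorder α] [OrderBot α] {p : ℕ} {f : Fin p → α} :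
    Monotone (Fin.cons ⊥ f : Fin (p + 1) → α) ↔ Monotone f := by
  refine ⟨fun hmono i j hij => by simpa using hmono (Fin.succ_le_succ_iff.2 hij),
    fun hmono i j hij => ?_⟩
  cases i using Fin.cases with
  | zero => exact bot_le
  | succ i =>
    cases j using Fin.cases with
    | zero => simp at hij
    | succ j => simpa using hmono (Fin.succ_le_succ_iff.1 hij)

lemma monotone_succ_comp_iff {p s : ℕ} {lam : Fin p → Fin s} :
    Monotone (Fin.succ ∘ lam) ↔ Monotone lam :=
  ⟨fun hmono _ _ hij => Fin.succ_le_succ_iff.1 (hmono hij),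
    fun hmono => Fin.strictMono_succ.monotone.comp hmono⟩

lemma monotoneSum_cons_zero {p s : ℕ} (c : Fin (p + 1) → ℕ) :
    ∑ lam ∈ univ.filter (fun lam : Fin (p + 1) → Fin (s + 1) => Monotone lam) with lam 0 = 0,
        ladderTerm y n h c lam =
      y (c 0) ((∑ i : Fin p, c i.succ : ℕ) * n) * monotoneSum y n h (Fin.tail c) (s + 1) := by
  rw [monotoneSum, mul_sum]
  symm
  refine sum_nbij' (fun lam => Fin.cons (0 : Fin (s + 1)) lam) Fin.tail ?_ ?_ ?_ ?_ ?_
  · intro lam hlam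
    simp only [mem_filter, mem_univ, true_and] at hlam ⊢
    exact ⟨monotone_cons_bot_iff.2 hlam, rfl⟩
  · intro lam hlam
    simp only [mem_filter, mem_univ, true_and] at hlam ⊢
    have hmono := hlam.1
    rw [← Fin.cons_self_tail lam, hlam.2] at hmono
    exact monotone_cons_bot_iff.1 hmono
  · intro lam _
    exact Fin.tail_cons _ _
  · intro lam hlam
    rw [← (mem_filter.1 hlam).2, Fin.cons_self_tail]
  · intro lam _
    rw [ladderTerm_cons_zero]

lemma monotoneSum_shift {p s : ℕ} (c : Fin (p + 1) → ℕ) :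
    ∑ lam ∈ univ.filter (fun lam : Fin (p + 1) → Fin (s + 1) => Monotone lam) with ¬lam 0 = 0,
        ladderTerm y n h c lam =
      monotoneSum (shiftVar y h) n h c s := by
  have hne {lam : Fin (p + 1) → Fin (s + 1)} (hmono : Monotone lam) (h0 : lam 0 ≠ 0)
      (i : Fin (p + 1)) : lam i ≠ 0 :=
    fun hi => h0 (le_antisymm (hi ▸ hmono (Fin.zero_le i)) (Fin.zero_le _))
  rw [monotoneSum]
  symm
  refine sum_bij' (fun mu _ => Fin.succ ∘ mu) (fun lam hlam i =>
    (lam i).pred (hne (mem_filter.1 (mem_filter.1 hlam).1).2 (mem_filter.1 hlam).2 i))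
    ?_ ?_ ?_ ?_ ?_
  · intro mu hmu
    simp only [mem_filter, mem_univ, true_and, monotone_succ_comp_iff] at hmu ⊢
    exact ⟨hmu, Fin.succ_ne_zero _⟩
  · intro lam hlam
    simp only [mem_filter, mem_univ, true_and] at hlam ⊢
    exact fun i j hij => Fin.pred_le_pred_iff.2 (hlam.1 hij)
  · intro mu _
    ext i
    simp
  · intro lam _
    ext i
    simp
  · intro mu _
    rw [ladderTerm_succ_comp]

lemma monotoneSum_succ {p s : ℕ} (c : Fin (p + 1) → ℕ) :
    monotoneSum y n h c (s + 1) =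
      monotoneSum (shiftVar y h) n h c s +
        y (c 0) ((∑ i : Fin p, c i.succ : ℕ) * n) * monotoneSum y n h (Fin.tail c) (s + 1) := by
  rw [monotoneSum, ← sum_filter_not_add_sum_filter _ (fun lam => lam 0 = 0),
    monotoneSum_shift, monotoneSum_cons_zero]

-- Agrees with `Spoly` for `m ≥ 1`; the empty composition of `0` makes `Spoly' y n h 0 s = 1`.
def Spoly' (m s : ℕ) : R :=
  (-1) ^ m * ∑ p ∈ range (m + 1), (-1) ^ p * ∑ c ∈ compositionTuples p m, monotoneSum y n h c s

lemma Spoly'_eq_Spoly {m : ℕ} (hm : 1 ≤ m) (s : ℕ) : Spoly' y n h m s = Spoly y n h m s := by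
  rw [Spoly', Spoly, range_eq_Ico, sum_eq_sum_Ico_succ_bot (by omega),
    compositionTuples_zero_left (by omega), sum_empty, mul_zero, zero_add,
    Ico_add_one_right_eq_Icc]
  refine congrArg _ (sum_congr rfl fun p _ => congrArg _ ?_)
  rw [← sum_comps_eq_sum_compositionTuples]
  refine sum_congr rfl fun K _ => sum_congr rfl fun lam _ => prod_congr rfl fun i _ => ?_
  simp [sufSum]

lemma Spoly'_zero (s : ℕ) : Spoly' y n h 0 s = 1 := by
  simp [Spoly', compositionTuples_zero_zero, monotoneSum, ladderTerm, Subsingleton.monotone]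

lemma Spoly'_eq_sum_range {m N : ℕ} (hN : m < N) (s : ℕ) :
    Spoly' y n h m s =
      (-1) ^ m * ∑ p ∈ range N, (-1) ^ p * ∑ c ∈ compositionTuples p m, monotoneSum y n h c s := by
  refine congrArg _ (sum_subset (range_subset_range.2 hN) fun p _ hp => ?_)
  rw [compositionTuples_eq_empty_of_lt (by simpa using hp), sum_empty, mul_zero]

lemma Spoly'_eq_sum_succ {k : ℕ} (hk : 1 ≤ k) (s : ℕ) :
    Spoly' y n h k s = (-1) ^ k * ∑ p ∈ range k,
      (-1) ^ (p + 1) * ∑ c ∈ compositionTuples (p + 1) k, monotoneSum y n h c s := by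
  rw [Spoly', sum_range_succ', compositionTuples_zero_left (by omega), sum_empty, mul_zero,
    add_zero]

lemma sum_compositionTuples_succ_mul_monotoneSum (p k s : ℕ) :
    ∑ c ∈ compositionTuples (p + 1) k,
        y (c 0) ((∑ i : Fin p, c i.succ : ℕ) * n) * monotoneSum y n h (Fin.tail c) s =
      ∑ j ∈ Icc 1 k, y j ((k - j : ℕ) * n) * ∑ c ∈ compositionTuples p (k - j),
        monotoneSum y n h c s := by
  rw [sum_compositionTuples_succ]
  refine sum_congr rfl fun j _ => ?_
  rw [mul_sum]
  refine sum_congr rfl fun c hc => ?_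
  simp [(mem_compositionTuples.1 hc).2]

lemma Spoly'_shiftVar {k : ℕ} (hk : 1 ≤ k) (s : ℕ) :
    Spoly' (shiftVar y h) n h k s =
      Spoly' y n h k (s + 1) +
        ∑ j ∈ Icc 1 k, (-1) ^ j * y j ((k - j : ℕ) * n) * Spoly' y n h (k - j) (s + 1) := by
  have hterm : ∀ j ∈ Icc 1 k, (-1) ^ k * ∑ p ∈ range k, (-1) ^ (p + 1) *
        (y j ((k - j : ℕ) * n) * ∑ c ∈ compositionTuples p (k - j), monotoneSum y n h c (s + 1)) =
      -((-1) ^ j * y j ((k - j : ℕ) * n) * Spoly' y n h (k - j) (s + 1)) := by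
    intro j hj
    rw [mem_Icc] at hj
    have hsign : (-1 : R) ^ k = (-1) ^ j * (-1) ^ (k - j) := by
      rw [← pow_add, Nat.add_sub_cancel' hj.2]
    have hfactor : ∑ p ∈ range k, (-1 : R) ^ (p + 1) *
          (y j ((k - j : ℕ) * n) * ∑ c ∈ compositionTuples p (k - j), monotoneSum y n h c (s + 1)) =
        -(y j ((k - j : ℕ) * n) * ∑ p ∈ range k, (-1) ^ p *
          ∑ c ∈ compositionTuples p (k - j), monotoneSum y n h c (s + 1)) := by
      rw [mul_sum, ← sum_neg_distrib]
      exact sum_congr rfl fun p _ => by ring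
    rw [hfactor, Spoly'_eq_sum_range y n h (show k - j < k by omega), hsign]
    ring
  have hcross : (-1) ^ k * ∑ p ∈ range k, (-1) ^ (p + 1) * ∑ j ∈ Icc 1 k,
        y j ((k - j : ℕ) * n) * ∑ c ∈ compositionTuples p (k - j), monotoneSum y n h c (s + 1) =
      -∑ j ∈ Icc 1 k, (-1) ^ j * y j ((k - j : ℕ) * n) * Spoly' y n h (k - j) (s + 1) := by
    rw [sum_congr rfl fun p _ => mul_sum _ _ _, sum_comm, mul_sum, sum_congr rfl hterm,
      sum_neg_distrib]
  rw [Spoly'_eq_sum_succ _ _ _ hk, Spoly'_eq_sum_succ _ _ _ hk]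
  simp only [monotoneSum_succ, mul_add, sum_add_distrib, sum_compositionTuples_succ_mul_monotoneSum]
  rw [hcross]
  ring

end

theorem Spoly_rec_shift_general {R : Type*} [CommRing R] (y : ℕ → ℤ → R) (n h : ℤ)
    (k s : ℕ) (hk : 1 ≤ k) (hs : 2 ≤ s) :
    Spoly (shiftVar y h) n h k (s - 1) =
      Spoly y n h k s +
        (∑ j ∈ Finset.Ico 1 k,
          (-1 : R) ^ j * y j (((k - j : ℕ) : ℤ) * n) * Spoly y n h (k - j) s) +
        (-1 : R) ^ k * y k 0 := by
  obtain ⟨s, rfl⟩ : ∃ s', s = s' + 1 := ⟨s - 1, by omega⟩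
  rw [Nat.add_sub_cancel, ← Spoly'_eq_Spoly _ _ _ hk, Spoly'_shiftVar _ _ _ hk,
    Spoly'_eq_Spoly _ _ _ hk, ← Ico_add_one_right_eq_Icc, sum_Ico_succ_top hk, Nat.sub_self,
    Spoly'_zero, mul_one, Nat.cast_zero, zero_mul, add_assoc]
  refine congrArg _ (congrArg (· + _) (sum_congr rfl fun j hj => ?_))
  rw [Spoly'_eq_Spoly _ _ _ (by rw [mem_Ico] at hj; omega)]

/-- `S^{k,h}_{s-1} = S^k_s + Σ_{j=1}^{k-1} (-1)^j y^j_{(k-j)n} S^{k-j}_s + (-1)^k y^k_0`. -/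
theorem Spoly_rec_shift {R : Type*} [CommRing R] (y : ℕ → ℤ → R) (n h : ℤ)
    (hn : 1 ≤ n) (hh : 1 ≤ h) (k s : ℕ) (hk : 1 ≤ k) (hs : 2 ≤ s) :
    Spoly (shiftVar y h) n h k (s - 1) =
      Spoly y n h k s +
        (∑ j ∈ Finset.Ico 1 k,
          (-1 : R) ^ j * y j (((k - j : ℕ) : ℤ) * n) * Spoly y n h (k - j) s) +
        (-1 : R) ^ k * y k 0 :=
  Spoly_rec_shift_general y n h k s hk hs
end

section
/- Define x^k_j = S^{k,j}_1, i.e. the shift by j of S^k_1 = (-1)^k Σ_K (-1)^p y^{k_1}_{(k_2+...+k_p)n} ⋯ y^{k_{p-1}}_{k_p n} y^{k_p}_0 (sum over compositions K of k). Then for every k ≥ 1 and j ∈ ℤ the relation x^k_j + Σ_{q=1}^{k-1} (-1)^q y^q_{j+(k-q)n} x^{k-q}_j + (-1)^k y^k_j = 0 holds. -/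
open Finset

/-- The variables `x^k_j = (-1)^k Σ_K (-1)^p y^{k_1}_{j+(k_2+⋯+k_p)n} ⋯ y^{k_p}_j`
(sum over compositions `K` of `k`), i.e. `x^k_j = S^{k,j}_1`. -/
def Xvar {R : Type*} [CommRing R] (y : ℕ → ℤ → R) (n : ℤ) (k : ℕ) (j : ℤ) : R :=
  (-1) ^ k * ∑ p ∈ Finset.Icc 1 k, (-1) ^ p *
    ∑ K ∈ comps k p, ∏ i, y ((K i : ℕ)) (j + sufSum K i * n)


/-!
Write `A_k = Σ_p (-1)^p Σ_{K ∈ comps k p} ∏_i f(k_i, k_{i+1} + ⋯ + k_p)`, so that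
`x^k_j = (-1)^k A_k` for `f(r, t) = y^r_{j+tn}`. Splitting off the first part `q = k_1` is a
bijection between compositions of `k` into `p + 1` parts and pairs of some `q ∈ [1, k]` and a
composition of `k - q` into `p` parts; it leaves the suffix sums of the remaining parts unchanged,
while the suffix sum after `k_1` is `k - q`. Hence `A_k = -f(k, 0) - Σ_{q=1}^{k-1} f(q, k - q) A_{k-q}`,
and multiplying by `(-1)^k` gives the relation.
-/

section CompositionSums

variable {R : Type*} [CommSemiring R] (f : ℕ → ℤ → R)

lemma mem_comps {k p : ℕ} {K : Fin p → Fin (k + 1)} :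
    K ∈ comps k p ↔ (∀ i, 1 ≤ (K i : ℕ)) ∧ ∑ i, (K i : ℕ) = k := by
  simp [comps]

lemma mem_comps_succ {k p : ℕ} {K : Fin (p + 1) → Fin (k + 1)} :
    K ∈ comps k (p + 1) ↔ 1 ≤ (K 0 : ℕ) ∧ (∀ l : Fin p, 1 ≤ (K l.succ : ℕ)) ∧
      (K 0 : ℕ) + ∑ l : Fin p, (K l.succ : ℕ) = k := by
  rw [mem_comps, Fin.forall_fin_succ, Fin.sum_univ_succ, and_assoc]

lemma sufSum_zero {k p : ℕ} (K : Fin (p + 1) → Fin (k + 1)) :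
    sufSum K 0 = ∑ l : Fin p, ((K l.succ : ℕ) : ℤ) := by
  rw [sufSum, Fin.sum_Ioi_zero]

lemma sufSum_succ {k p : ℕ} (K : Fin (p + 1) → Fin (k + 1)) (l : Fin p) :
    sufSum K l.succ = sufSum (Fin.tail K) l := by
  rw [sufSum, sufSum, Fin.sum_Ioi_succ]; rfl

lemma sufSum_congr {k k' p : ℕ} {K : Fin p → Fin (k + 1)} {K' : Fin p → Fin (k' + 1)}
    (h : ∀ i, (K i : ℕ) = K' i) (i : Fin p) : sufSum K i = sufSum K' i := by
  simp only [sufSum, h]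

def compSum (k p : ℕ) : R :=
  ∑ K ∈ comps k p, ∏ i, f (K i : ℕ) (sufSum K i)

lemma compSum_zero_right (k : ℕ) : compSum f k 0 = if k = 0 then 1 else 0 := by
  rcases k with _ | k <;> simp [compSum, comps, eq_comm]

lemma val_succ_lt_of_mem_comps_succ {k p : ℕ} {K : Fin (p + 1) → Fin (k + 1)}
    (hK : K ∈ comps k (p + 1)) (l : Fin p) : (K l.succ : ℕ) < k - K 0 + 1 := by
  obtain ⟨-, -, hsum⟩ := mem_comps_succ.mp hK
  have := single_le_sum (fun m _ => Nat.zero_le (K (Fin.succ m) : ℕ)) (mem_univ l)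
  omega

lemma compSum_succ (k p : ℕ) :
    compSum f k (p + 1) = ∑ q ∈ Icc 1 k, f q ((k - q : ℕ) : ℤ) * compSum f (k - q) p := by
  simp only [compSum, mul_sum]
  rw [sum_sigma']
  refine sum_bij' (fun K hK => ⟨K 0, fun l => ⟨K l.succ, val_succ_lt_of_mem_comps_succ hK l⟩⟩)
    (fun x hx => Fin.cons ⟨x.1, Nat.lt_succ_of_le (mem_Icc.mp (mem_sigma.mp hx).1).2⟩
      fun l => Fin.castLE (Nat.succ_le_succ (Nat.sub_le k x.1)) (x.2 l))
    ?_ ?_ (fun _ _ => funext (Fin.cases rfl fun _ => rfl)) (fun _ _ => rfl) ?_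
  · intro K hK
    obtain ⟨h0, hpos, hsum⟩ := mem_comps_succ.mp hK
    simp only [mem_sigma, mem_Icc, mem_comps]
    exact ⟨⟨h0, by omega⟩, hpos, by omega⟩
  · rintro ⟨q, L⟩ hx
    obtain ⟨hq, hpos, hsum⟩ := by simpa only [mem_sigma, mem_Icc, mem_comps] using hx
    simp only [mem_comps_succ, Fin.cons_zero, Fin.cons_succ, Fin.val_castLE]
    exact ⟨hq.1, hpos, by omega⟩
  · intro K hK
    obtain ⟨-, -, hsum⟩ := mem_comps_succ.mp hK
    have hsuf : sufSum K 0 = ((k - K 0 : ℕ) : ℤ) := by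
      rw [sufSum_zero, ← Nat.cast_sum]
      congr 1
      omega
    rw [Fin.prod_univ_succ, hsuf]
    congr 1
    refine prod_congr rfl fun l _ => ?_
    rw [sufSum_succ]
    exact congrArg _ (sufSum_congr (fun _ => rfl) l)

lemma compSum_eq_zero_of_lt {k p : ℕ} (h : k < p) : compSum f k p = 0 := by
  induction p generalizing k with
  | zero => omega
  | succ p ih =>
    rw [compSum_succ]
    refine sum_eq_zero fun q hq => ?_
    rw [ih (by grind), mul_zero]

lemma compSum_one {k : ℕ} (hk : 1 ≤ k) : compSum f k 1 = f k 0 := by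
  rw [compSum_succ, sum_eq_single_of_mem k (mem_Icc.mpr ⟨hk, le_rfl⟩)]
  · simp [compSum_zero_right]
  · intro q hq hqk
    rw [compSum_zero_right, if_neg (by grind), mul_zero]

lemma compSum_add_two (m p : ℕ) :
    compSum f (m + 1) (p + 2) =
      ∑ q ∈ Ico 1 (m + 1), f q ((m + 1 - q : ℕ) : ℤ) * compSum f (m + 1 - q) (p + 1) := by
  rw [compSum_succ, ← Ico_add_one_right_eq_Icc, sum_Ico_succ_top (by omega), Nat.sub_self,
    compSum_eq_zero_of_lt f (Nat.succ_pos p), mul_zero, add_zero]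

end CompositionSums

section AlternatingCompositionSums

variable {R : Type*} [CommRing R] (f : ℕ → ℤ → R)

def altCompSum (k : ℕ) : R :=
  ∑ p ∈ Icc 1 k, (-1 : R) ^ p * compSum f k p

lemma altCompSum_eq_sum_range {k N : ℕ} (h : k ≤ N) :
    altCompSum f k = ∑ p ∈ range N, (-1 : R) ^ (p + 1) * compSum f k (p + 1) := by
  rw [altCompSum, ← Ico_add_one_right_eq_Icc, sum_Ico_eq_sum_range, add_tsub_cancel_right]
  simp only [add_comm 1]
  refine sum_subset (range_mono h) fun p _ hp => ?_
  rw [compSum_eq_zero_of_lt f (by grind), mul_zero]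

lemma altCompSum_add_sum_add_eq_zero {k : ℕ} (hk : 1 ≤ k) :
    altCompSum f k + ∑ q ∈ Ico 1 k, f q ((k - q : ℕ) : ℤ) * altCompSum f (k - q) + f k 0 = 0 := by
  obtain ⟨m, rfl⟩ := Nat.exists_eq_add_of_le' hk
  have htail : ∑ q ∈ Ico 1 (m + 1), f q ((m + 1 - q : ℕ) : ℤ) * altCompSum f (m + 1 - q) =
      ∑ q ∈ Ico 1 (m + 1), f q ((m + 1 - q : ℕ) : ℤ) *
        ∑ p ∈ range m, (-1 : R) ^ (p + 1) * compSum f (m + 1 - q) (p + 1) :=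
    sum_congr rfl fun q hq => by rw [altCompSum_eq_sum_range (N := m) f (by grind)]
  rw [altCompSum_eq_sum_range f le_rfl, sum_range_succ', compSum_one f hk, htail]
  simp only [compSum_add_two, mul_sum]
  rw [sum_comm]
  have hcancel : ∑ q ∈ Ico 1 (m + 1), ∑ p ∈ range m,
        (-1 : R) ^ (p + 1 + 1) * (f q ((m + 1 - q : ℕ) : ℤ) * compSum f (m + 1 - q) (p + 1)) +
      ∑ q ∈ Ico 1 (m + 1), ∑ p ∈ range m,
        f q ((m + 1 - q : ℕ) : ℤ) * ((-1) ^ (p + 1) * compSum f (m + 1 - q) (p + 1)) = 0 := by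
    simp only [← sum_add_distrib]
    exact sum_eq_zero fun q _ => sum_eq_zero fun p _ => by ring
  linear_combination hcancel

end AlternatingCompositionSums

lemma Xvar_eq_altCompSum {R : Type*} [CommRing R] (y : ℕ → ℤ → R) (n : ℤ) (k : ℕ) (j : ℤ) :
    Xvar y n k j = (-1) ^ k * altCompSum (fun r t => y r (j + t * n)) k :=
  rfl

theorem Xvar_rel_general {R : Type*} [CommRing R] (y : ℕ → ℤ → R) (n : ℤ)
    (k : ℕ) (hk : 1 ≤ k) (j : ℤ) :
    Xvar y n k j +
      (∑ q ∈ Finset.Ico 1 k,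
        (-1 : R) ^ q * y q (j + ((k - q : ℕ) : ℤ) * n) * Xvar y n (k - q) j) +
      (-1 : R) ^ k * y k j = 0 := by
  have hsign : ∀ q ∈ Ico 1 k, (-1 : R) ^ q * (-1) ^ (k - q) = (-1) ^ k := fun q hq => by
    rw [← pow_add, Nat.add_sub_cancel' (mem_Ico.mp hq).2.le]
  have hrec := congrArg ((-1 : R) ^ k * ·)
    (altCompSum_add_sum_add_eq_zero (fun r t => y r (j + t * n)) hk)
  simp only [mul_add, mul_sum, mul_zero, zero_mul, add_zero] at hrec
  simp only [Xvar_eq_altCompSum]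
  rw [← hrec]
  congr 2
  refine sum_congr rfl fun q hq => ?_
  rw [← hsign q hq]
  ring

/-- `x^k_j + Σ_{q=1}^{k-1} (-1)^q y^q_{j+(k-q)n} x^{k-q}_j + (-1)^k y^k_j = 0`. -/
theorem Xvar_rel {R : Type*} [CommRing R] (y : ℕ → ℤ → R) (n : ℤ)
    (hn : 1 ≤ n) (k : ℕ) (hk : 1 ≤ k) (j : ℤ) :
    Xvar y n k j +
      (∑ q ∈ Finset.Ico 1 k,
        (-1 : R) ^ q * y q (j + ((k - q : ℕ) : ℤ) * n) * Xvar y n (k - q) j) +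
      (-1 : R) ^ k * y k j = 0 :=
  Xvar_rel_general y n k hk j
end
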